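/- arXiv:2511.19361 — 2 statements merged into one kernel-verified Lean document; each statement's English description precedes it below -/
import Mathlib

section
/- Let k ≥ ℓ ≥ 0. The map λ ↦ (λ_0, μ(λ)) is a bijection between self-conjugate typical partitions in H'(k,ℓ) and pairs (λ_0, μ) where μ is a partition with at most ℓ parts and λ_0 is a self-conjugate partition containing (k^ℓ, ℓ^{k-ℓ}) and contained in the square (k^k). -/
/-- A partition, recorded by its (0-indexed) parts: `parts i` is the
`(i+1)`-st part `λ_{i+1}`. -/
structure FinsuppPartition where
  parts : ℕ →₀ ℕ
  antitone : ∀ ⦃i j : ℕ⦄, i ≤ j → parts j ≤ parts i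

/-- The size `|λ|` of a partition: the sum of its parts. -/
def psize (lam : FinsuppPartition) : ℕ := lam.parts.sum fun _ m => m

/-- The conjugate partition: `pconj lam j` is the `(j+1)`-st part `λ'_{j+1}`
of the conjugate, i.e. the number of parts of `λ` that are `> j`. -/
def pconj (lam : FinsuppPartition) (j : ℕ) : ℕ :=
  (lam.parts.support.filter fun i => j < lam.parts i).card

theorem FinsuppPartition.ext' {a b : FinsuppPartition} (h : ∀ i, a.parts i = b.parts i) : a = b := by
  obtain ⟨pa, ha⟩ := a
  obtain ⟨pb, hb⟩ := b
  have : pa = pb := Finsupp.ext h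
  subst this
  rfl

theorem pconj_lt_iff (lam : FinsuppPartition) (m j : ℕ) :
    j < pconj lam m ↔ m < lam.parts j := by
  unfold pconj
  constructor
  · intro h
    by_contra hc
    push_neg at hc
    have hsub : (lam.parts.support.filter fun i => m < lam.parts i) ⊆ Finset.range j := by
      intro i hi
      simp only [Finset.mem_filter, Finsupp.mem_support_iff, Finset.mem_range] at hi ⊢
      by_contra hij
      push_neg at hij
      exact absurd hi.2 (not_lt.2 ((lam.antitone hij).trans hc))
    have hcard := Finset.card_le_card hsub
    rw [Finset.card_range] at hcard
    omega
  · intro h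
    have hsub : Finset.range (j+1) ⊆ lam.parts.support.filter fun i => m < lam.parts i := by
      intro i hi
      rw [Finset.mem_range] at hi
      have h2 : m < lam.parts i := lt_of_lt_of_le h (lam.antitone (Nat.lt_succ_iff.mp hi))
      simp only [Finset.mem_filter, Finsupp.mem_support_iff]
      exact ⟨by omega, h2⟩
    have hcard := Finset.card_le_card hsub
    rw [Finset.card_range] at hcard
    omega

theorem eqnat {a b : ℕ} (h : ∀ j, j < a ↔ j < b) : a = b := by
  rcases Nat.lt_trichotomy a b with h' | h' | h'
  · exact absurd ((h a).mpr h') (lt_irrefl a)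
  · exact h'
  · exact absurd ((h b).mp h') (lt_irrefl b)

theorem selfconj_lt {lam : FinsuppPartition} (h : ∀ j, pconj lam j = lam.parts j) (m j : ℕ) :
    j < lam.parts m ↔ m < lam.parts j := by
  rw [← h m, pconj_lt_iff]

theorem lt_selfconj {lam : FinsuppPartition} (h : ∀ m j, j < lam.parts m ↔ m < lam.parts j) (j : ℕ) :
    pconj lam j = lam.parts j :=
  eqnat fun i => by rw [pconj_lt_iff]; exact h i j

theorem pconj_le {lam : FinsuppPartition} {l : ℕ} (h : lam.parts l = 0) (m : ℕ) : pconj lam m ≤ l := by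
  by_contra hc
  push_neg at hc
  have := (pconj_lt_iff lam m l).mp hc
  omega

theorem pconj_anti (lam : FinsuppPartition) {m m' : ℕ} (h : m ≤ m') : pconj lam m' ≤ pconj lam m := by
  unfold pconj
  apply Finset.card_le_card
  intro i hi
  simp only [Finset.mem_filter] at hi ⊢
  exact ⟨hi.1, lt_of_le_of_lt h hi.2⟩

noncomputable def mkPartition (f : ℕ → ℕ) (N : ℕ) (h0 : ∀ i, N ≤ i → f i = 0)
    (ha : ∀ ⦃i j : ℕ⦄, i ≤ j → f j ≤ f i) : FinsuppPartition where
  parts := Finsupp.onFinset (Finset.range N) f fun a ha' =>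
    Finset.mem_range.2 (by by_contra hc; exact ha' (h0 a (by omega)))
  antitone := ha

@[simp] theorem mkPartition_parts (f : ℕ → ℕ) (N h0 ha) (i : ℕ) :
    (mkPartition f N h0 ha).parts i = f i := rfl

noncomputable def fwd (k l : ℕ) (hlk : l ≤ k)
    (x : {lam : FinsuppPartition // (∀ j, pconj lam j = lam.parts j) ∧
      lam.parts k ≤ l ∧ l ≤ lam.parts (k - 1)}) :
    {p : FinsuppPartition × FinsuppPartition // (∀ j, pconj p.1 j = p.1.parts j) ∧
      (∀ i, (if i < l then k else if i < k then l else 0) ≤ p.1.parts i) ∧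
      (∀ i, p.1.parts i ≤ (if i < k then k else 0)) ∧ p.2.parts l = 0} :=
  ⟨(mkPartition (fun i => if i < k then min (x.1.parts i) k else 0) k
      (fun i hi => by simp [Nat.not_lt.2 hi])
      (fun i j hij => by
        have := x.1.antitone hij
        split_ifs <;> omega),
    mkPartition (fun i => if i < l then x.1.parts i - k else 0) l
      (fun i hi => by simp [Nat.not_lt.2 hi])
      (fun i j hij => by
        have := x.1.antitone hij
        split_ifs <;> omega)), by
    obtain ⟨lam, hsc, hk, hk1⟩ := x
    have H := selfconj_lt hsc
    have hge : ∀ i, i < l → k ≤ lam.parts i := by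
      intro i hi
      have h1 := H i (k - 1)
      omega
    refine ⟨?_, ?_, ?_, ?_⟩
    · refine lt_selfconj ?_ 
      intro m j
      simp only [mkPartition_parts]
      have := H m j
      split_ifs <;> omega
    · intro i
      simp only [mkPartition_parts]
      have h1 := hge i
      have h2 : i ≤ k - 1 → lam.parts (k - 1) ≤ lam.parts i := fun h => lam.antitone h
      split_ifs <;> omega
    · intro i
      simp only [mkPartition_parts]
      split_ifs <;> omega
    · simp⟩

noncomputable def bwd (k l : ℕ) (hlk : l ≤ k)
    (p : {p : FinsuppPartition × FinsuppPartition // (∀ j, pconj p.1 j = p.1.parts j) ∧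
      (∀ i, (if i < l then k else if i < k then l else 0) ≤ p.1.parts i) ∧
      (∀ i, p.1.parts i ≤ (if i < k then k else 0)) ∧ p.2.parts l = 0}) :
    {lam : FinsuppPartition // (∀ j, pconj lam j = lam.parts j) ∧
      lam.parts k ≤ l ∧ l ≤ lam.parts (k - 1)} :=
  ⟨mkPartition
      (fun i => if i < l then k + p.1.2.parts i
        else if i < k then p.1.1.parts i else pconj p.1.2 (i - k))
      (k + p.1.2.parts 0 + 1)
      (fun i hi => by
        have h2 : ¬ (0 < pconj p.1.2 (i - k)) := by
          rw [pconj_lt_iff]; omega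
        rw [if_neg (by omega), if_neg (by omega)]
        omega)
      (fun i j hij => by
        have hBanti := p.1.2.antitone hij
        have hAanti := p.1.1.antitone hij
        have hpc : pconj p.1.2 (j - k) ≤ pconj p.1.2 (i - k) := pconj_anti _ (by omega)
        have hpl1 : pconj p.1.2 (i - k) ≤ l := pconj_le p.2.2.2.2 _
        have hpl2 : pconj p.1.2 (j - k) ≤ l := pconj_le p.2.2.2.2 _
        have hAk : p.1.1.parts j ≤ k := le_trans (p.2.2.2.1 j) (by split <;> omega)
        have hAl : ¬ i < l → i < k → l ≤ p.1.1.parts i := fun h1 h2 => by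
          have := p.2.2.1 i; rw [if_neg h1, if_pos h2] at this; exact this
        split_ifs <;> omega), by
    obtain ⟨⟨A, B⟩, hsc0, hlow, hup, hB⟩ := p
    simp only at hsc0 hlow hup hB
    have H0 := selfconj_lt hsc0
    have hAk : ∀ i, A.parts i ≤ k := fun i => le_trans (hup i) (by split <;> omega)
    have hA0 : ∀ i, k ≤ i → A.parts i = 0 := fun i hi => by
      have := hup i; rw [if_neg (by omega)] at this; omega
    have hAl : ∀ i, i < k → l ≤ A.parts i := fun i hi => by
      have := hlow i; split_ifs at this <;> omega
    have hB0 : ∀ i, l ≤ i → B.parts i = 0 := fun i hi => by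
      have := B.antitone hi; omega
    have hpcle : ∀ m, pconj B m ≤ l := fun m => pconj_le hB m
    refine ⟨?_, ?_, ?_⟩
    · refine lt_selfconj ?_ 
      intro m j
      simp only [mkPartition_parts]
      rcases Nat.lt_or_ge m l with hm1 | hm1
      · rcases Nat.lt_or_ge j l with hj1 | hj1
        · rw [if_pos hm1, if_pos hj1]; omega
        · rcases Nat.lt_or_ge j k with hj2 | hj2
          · rw [if_pos hm1, if_neg (by omega), if_pos hj2]
            have := hAl j hj2; omega
          · rw [if_pos hm1, if_neg (by omega), if_neg (by omega), pconj_lt_iff]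
            omega
      · rcases Nat.lt_or_ge m k with hm2 | hm2
        · rcases Nat.lt_or_ge j l with hj1 | hj1
          · rw [if_neg (by omega), if_pos hm2, if_pos hj1]
            have := hAl m hm2; omega
          · rcases Nat.lt_or_ge j k with hj2 | hj2
            · rw [if_neg (by omega), if_pos hm2, if_neg (by omega), if_pos hj2]
              exact H0 m j
            · rw [if_neg (by omega), if_pos hm2, if_neg (by omega), if_neg (by omega)]
              have h1 := hAk m
              have h2 := hpcle (j - k)
              omega
        · rcases Nat.lt_or_ge j l with hj1 | hj1
          · rw [if_neg (by omega), if_neg (by omega), if_pos hj1, pconj_lt_iff]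
            omega
          · rcases Nat.lt_or_ge j k with hj2 | hj2
            · rw [if_neg (by omega), if_neg (by omega), if_neg (by omega), if_pos hj2]
              have h1 := hAk j
              have h2 := hpcle (m - k)
              omega
            · rw [if_neg (by omega), if_neg (by omega), if_neg (by omega), if_neg (by omega),
                pconj_lt_iff, pconj_lt_iff]
              have h1 := hB0 m (by omega)
              have h2 := hB0 j (by omega)
              omega
    · simp only [mkPartition_parts]
      rw [if_neg (by omega), if_neg (by omega)]
      exact hpcle (k - k)
    · simp only [mkPartition_parts]
      rcases Nat.eq_zero_or_pos k with hk0 | hk0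
      · omega
      · by_cases hkl : k - 1 < l
        · rw [if_pos hkl]; omega
        · rw [if_neg hkl, if_pos (by omega)]
          exact hAl (k - 1) (by omega)⟩

/-- For `k ≥ ℓ ≥ 0`, the map `λ ↦ (λ₀, μ(λ))` is a bijection between
self-conjugate typical partitions in `H'(k,ℓ)` and pairs `(λ₀, μ)` with `μ`
of at most `ℓ` parts and `λ₀` self-conjugate with
`(k^ℓ, ℓ^{k-ℓ}) ⊆ λ₀ ⊆ (k^k)`. -/
theorem selfconjugate_typical_bijection (k l : ℕ) (hlk : l ≤ k) :
    ∃ e : {lam : FinsuppPartition //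
            (∀ j, pconj lam j = lam.parts j) ∧
            lam.parts k ≤ l ∧ l ≤ lam.parts (k - 1)} ≃
          {p : FinsuppPartition × FinsuppPartition //
            (∀ j, pconj p.1 j = p.1.parts j) ∧
            (∀ i, (if i < l then k else if i < k then l else 0) ≤ p.1.parts i) ∧
            (∀ i, p.1.parts i ≤ (if i < k then k else 0)) ∧
            p.2.parts l = 0},
      ∀ lam, (∀ i, (e lam).1.1.parts i = (if i < k then min (lam.1.parts i) k else 0)) ∧
             (∀ i, i < l → (e lam).1.2.parts i = lam.1.parts i - k) := by
  refine ⟨⟨fwd k l hlk, bwd k l hlk, ?_, ?_⟩, ?_⟩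
  · -- left inverse
    intro x
    obtain ⟨lam, hsc, hk, hk1⟩ := x
    apply Subtype.ext
    apply FinsuppPartition.ext'
    intro i
    have H := selfconj_lt hsc
    have hge : ∀ i, i < l → k ≤ lam.parts i := by
      intro i hi
      have h1 := H i (k - 1)
      omega
    have hle : ∀ i, l ≤ i → lam.parts i ≤ k := by
      intro i hi
      have h1 := H i k
      omega
    simp only [bwd, fwd, mkPartition_parts]
    rcases Nat.lt_or_ge i l with h1 | h1
    · rw [if_pos h1, if_pos h1]
      have := hge i h1; omega
    · rcases Nat.lt_or_ge i k with h2 | h2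
      · rw [if_neg (by omega), if_pos h2, if_pos h2]
        have := hle i h1; omega
      · rw [if_neg (by omega), if_neg (by omega)]
        refine eqnat fun j => ?_
        rw [pconj_lt_iff, mkPartition_parts]
        rcases Nat.lt_or_ge j l with hj | hj
        · rw [if_pos hj]
          have h3 := hge j hj
          have h4 := H i j
          omega
        · rw [if_neg (by omega)]
          have h5 := lam.antitone h2
          omega
  · -- right inverse
    intro p
    obtain ⟨⟨A, B⟩, hsc0, hlow, hup, hB⟩ := p
    simp only at hsc0 hlow hup hB
    have hAk : ∀ i, A.parts i ≤ k := fun i => le_trans (hup i) (by split <;> omega)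
    have hA0 : ∀ i, k ≤ i → A.parts i = 0 := fun i hi => by
      have := hup i; rw [if_neg (by omega)] at this; omega
    have hAl : ∀ i, i < k → l ≤ A.parts i := fun i hi => by
      have := hlow i; split_ifs at this <;> omega
    have hB0 : ∀ i, l ≤ i → B.parts i = 0 := fun i hi => by
      have := B.antitone hi; omega
    apply Subtype.ext
    refine Prod.ext ?_ ?_
    · apply FinsuppPartition.ext'
      intro i
      simp only [fwd, bwd, mkPartition_parts]
      rcases Nat.lt_or_ge i l with h1 | h1
      · rw [if_pos (by omega), if_pos h1]
        have h2 := hAk i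
        have h3 := hlow i
        rw [if_pos h1] at h3
        omega
      · rcases Nat.lt_or_ge i k with h2 | h2
        · rw [if_pos h2, if_neg (by omega), if_pos h2]
          have := hAk i; omega
        · rw [if_neg (by omega)]
          have := hA0 i h2; omega
    · apply FinsuppPartition.ext'
      intro i
      simp only [fwd, bwd, mkPartition_parts]
      rcases Nat.lt_or_ge i l with h1 | h1
      · rw [if_pos h1, if_pos h1]
        omega
      · rw [if_neg (by omega)]
        have := hB0 i h1; omega
  · -- spec
    intro lam
    constructor
    · intro i
      simp only [Equiv.coe_fn_mk, fwd, mkPartition_parts]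
    · intro i hi
      simp only [Equiv.coe_fn_mk, fwd, mkPartition_parts]
      rw [if_pos hi]
end

section
/- Let k ≥ ℓ. The generating function counting self-conjugate partitions containing (k^ℓ, ℓ^{k-ℓ}) and contained in (k^k) by size is u^{2kℓ - ℓ^2} · ∏_{i=1}^{k-ℓ} (1 + u^{2i-1}). -/
open PowerSeries

namespace SCGF
open Finset

/-- membership in a downward-closed finset of naturals is equivalent to being below the card -/
lemma mem_iff_lt_card (T : Finset ℕ) (h : ∀ x ∈ T, ∀ y, y ≤ x → y ∈ T) (a : ℕ) :
    a ∈ T ↔ a < T.card := by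
  constructor
  · intro ha
    have : range (a + 1) ⊆ T := fun y hy => h a ha y (by simpa using Nat.lt_succ_iff.mp (mem_range.mp hy))
    have := card_le_card this
    simpa using this
  · intro ha
    by_contra hna
    have : T ⊆ range a := by
      intro x hx
      rw [mem_range]
      by_contra hxa
      exact hna (h x hx a (le_of_not_gt hxa))
    have := card_le_card this
    simp at this
    omega

def gS (S : Finset ℕ) (b : ℕ) : ℕ := (S.filter fun s => b ≤ s).card

lemma gS_le_card (S : Finset ℕ) (b : ℕ) : gS S b ≤ S.card := card_filter_le _ _

lemma gS_zero (S : Finset ℕ) : gS S 0 = S.card := by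
  unfold gS
  rw [filter_true_of_mem]
  intro x _; exact Nat.zero_le x

lemma gS_anti (S : Finset ℕ) {b b' : ℕ} (h : b ≤ b') : gS S b' ≤ gS S b := by
  apply card_le_card
  intro x hx
  simp only [mem_filter] at hx ⊢
  exact ⟨hx.1, by omega⟩

lemma gS_split (S : Finset ℕ) {b b' : ℕ} (h : b ≤ b') :
    gS S b = gS S b' + (S.filter fun s => b ≤ s ∧ s < b').card := by
  unfold gS
  rw [← card_union_of_disjoint, ← filter_or]
  · apply congrArg
    apply filter_congr
    intro x _
    constructor
    · intro hx; omega
    · intro hx; omega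
  · rw [disjoint_filter]
    intro x _ hx hx2; omega

lemma filter_interval_card (S : Finset ℕ) (b b' : ℕ) :
    (S.filter fun s => b ≤ s ∧ s < b').card ≤ b' - b := by
  have : (S.filter fun s => b ≤ s ∧ s < b') ⊆ Ico b b' := by
    intro x hx
    simp only [mem_filter] at hx
    simp [mem_Ico]; omega
  have := card_le_card this
  simpa [Nat.card_Ico] using this

lemma gS_le_of_subset {S : Finset ℕ} {m : ℕ} (hS : S ⊆ range m) (b : ℕ) :
    gS S b ≤ m - b := by
  have : (S.filter fun s => b ≤ s) ⊆ Ico b m := by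
    intro x hx
    simp only [mem_filter] at hx
    have := hS hx.1
    simp at this
    simp [mem_Ico]; omega
  have := card_le_card this
  simpa [gS, Nat.card_Ico] using this

lemma gS_succ (S : Finset ℕ) (s : ℕ) :
    gS S s = gS S (s + 1) + (if s ∈ S then 1 else 0) := by
  rw [gS_split S (Nat.le_succ s)]
  congr 1
  have : (S.filter fun x => s ≤ x ∧ x < s + 1) = S.filter fun x => x = s := by
    apply filter_congr; intro x _; constructor <;> (intro; omega)
  rw [this]
  by_cases h : s ∈ S
  · rw [if_pos h]
    rw [filter_eq']
    simp [h]
  · rw [if_neg h]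
    rw [filter_eq']
    simp [h]

lemma gS_injective {S S' : Finset ℕ} (h : ∀ b, gS S b = gS S' b) : S = S' := by
  ext s
  have h1 := gS_succ S s
  have h2 := gS_succ S' s
  rw [h s, h (s+1)] at h1
  by_cases hs : s ∈ S <;> by_cases hs' : s ∈ S' <;> simp only [hs, hs', if_true, if_false] at h1 h2 <;> simp [hs, hs'] <;> omega

/-- the cell predicate: `(r,c)` is a cell of the self-conjugate partition encoded by `S` -/
def fcell (S : Finset ℕ) (r c : ℕ) : Prop := min r c < gS S (max r c - min r c)

instance (S : Finset ℕ) (r c : ℕ) : Decidable (fcell S r c) := by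
  unfold fcell; infer_instance

lemma fcell_comm (S : Finset ℕ) (r c : ℕ) : fcell S r c ↔ fcell S c r := by
  unfold fcell
  rw [min_comm, max_comm]

lemma fcell_le {S : Finset ℕ} {r c : ℕ} (h : r ≤ c) : fcell S r c ↔ r < gS S (c - r) := by
  unfold fcell
  rw [min_eq_left h, max_eq_right h]

lemma fcell_mono_right {S : Finset ℕ} {r c c' : ℕ} (hf : fcell S r c) (h : c' ≤ c) :
    fcell S r c' := by
  rcases le_or_gt r c' with h1 | h1
  · -- r ≤ c' ≤ c
    rw [fcell_le h1]
    rw [fcell_le (le_trans h1 h)] at hf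
    exact lt_of_lt_of_le hf (gS_anti S (by omega))
  · rcases le_or_gt r c with h2 | h2
    · -- c' < r ≤ c
      rw [fcell_le h2] at hf
      rw [fcell_comm, fcell_le (le_of_lt h1)]
      have hc : gS S (c - r) ≤ S.card := gS_le_card _ _
      have h3 := gS_split S (Nat.zero_le (r - c'))
      rw [gS_zero] at h3
      have h4 := filter_interval_card S 0 (r - c')
      omega
    · -- c' ≤ c < r
      rw [fcell_comm, fcell_le (le_of_lt h2)] at hf
      rw [fcell_comm, fcell_le (le_of_lt h1)]
      have h3 := gS_split S (show r - c ≤ r - c' by omega)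
      have h4 := filter_interval_card S (r - c) (r - c')
      omega

lemma fcell_mono_left {S : Finset ℕ} {r r' c : ℕ} (hf : fcell S r c) (h : r' ≤ r) :
    fcell S r' c := by
  rw [fcell_comm] at hf ⊢
  exact fcell_mono_right hf h

lemma fcell_lt_aux {S : Finset ℕ} {m r c : ℕ} (hS : S ⊆ range m) (h : r ≤ c)
    (hf : fcell S r c) : c < m := by
  rw [fcell_le h] at hf
  have := gS_le_of_subset hS (c - r)
  omega

lemma fcell_lt {S : Finset ℕ} {m r c : ℕ} (hS : S ⊆ range m) (hf : fcell S r c) :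
    r < m ∧ c < m := by
  rcases le_or_gt r c with h | h
  · have := fcell_lt_aux hS h hf
    omega
  · rw [fcell_comm] at hf
    have := fcell_lt_aux hS (le_of_lt h) hf
    omega

/-- the parts of the self-conjugate partition (inside an `m × m` square) encoded by `S` -/
def mu (m : ℕ) (S : Finset ℕ) (r : ℕ) : ℕ := ((range m).filter fun c => fcell S r c).card

lemma fcell_iff_lt_mu {S : Finset ℕ} {m : ℕ} (hS : S ⊆ range m) (r c : ℕ) :
    fcell S r c ↔ c < mu m S r := by
  have key := mem_iff_lt_card ((range m).filter fun c => fcell S r c) ?_ c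
  · simp only [mem_filter, mem_range] at key
    unfold mu
    rw [← key]
    constructor
    · intro h; exact ⟨(fcell_lt hS h).2, h⟩
    · intro h; exact h.2
  · intro x hx y hy
    simp only [mem_filter, mem_range] at hx ⊢
    exact ⟨by omega, fcell_mono_right hx.2 hy⟩

lemma mu_le (m : ℕ) (S : Finset ℕ) (r : ℕ) : mu m S r ≤ m := by
  have := card_filter_le (range m) (fun c => fcell S r c)
  simpa [mu] using this

lemma mu_anti (m : ℕ) (S : Finset ℕ) {r r' : ℕ} (h : r ≤ r') : mu m S r' ≤ mu m S r := by
  apply card_le_card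
  intro c hc
  simp only [mem_filter] at hc ⊢
  exact ⟨hc.1, fcell_mono_left hc.2 h⟩

lemma mu_eq_zero {S : Finset ℕ} {m : ℕ} (hS : S ⊆ range m) {r : ℕ} (h : m ≤ r) :
    mu m S r = 0 := by
  unfold mu
  rw [card_eq_zero, filter_eq_empty_iff]
  intro c _ hf
  have := (fcell_lt hS hf).1
  omega

lemma mu_symm {S : Finset ℕ} {m : ℕ} (hS : S ⊆ range m) (t : ℕ) :
    ((range m).filter fun a => t < mu m S a).card = mu m S t := by
  have heq : ((range m).filter fun a => t < mu m S a) = (range m).filter fun c => fcell S t c := by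
    apply filter_congr
    intro a _
    rw [← fcell_iff_lt_mu hS a t, fcell_comm]
  rw [heq]
  rfl

lemma fcell_add {S : Finset ℕ} (a b : ℕ) : fcell S a (a + b) ↔ a < gS S b := by
  rw [fcell_le (Nat.le_add_right a b)]
  congr! 2
  omega


lemma sum_pairs {S : Finset ℕ} {m : ℕ} (hS : S ⊆ range m) (t : ℕ) :
    ((range m ×ˢ range m).filter fun p => p.1 + t ≤ p.2 ∧ fcell S p.1 p.2).card
      = ∑ s ∈ S, (s + 1 - t) := by
  have hcard : S.card ≤ m := by simpa using card_le_card hS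
  have step1 : ((range m ×ˢ range m).filter fun p => p.1 + t ≤ p.2 ∧ fcell S p.1 p.2).card
      = ((range m ×ˢ range m).filter fun q => t ≤ q.2 ∧ q.1 < gS S q.2).card := by
    refine card_bij' (fun p _ => (p.1, p.2 - p.1)) (fun q _ => (q.1, q.1 + q.2)) ?_ ?_ ?_ ?_
    · rintro ⟨a, c⟩ hp
      dsimp only
      simp only [mem_filter, mem_product, mem_range] at hp ⊢
      obtain ⟨⟨ha, hc⟩, hac, hf⟩ := hp
      rw [fcell_le (by omega : a ≤ c)] at hf
      exact ⟨⟨ha, by omega⟩, by omega, hf⟩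
    · rintro ⟨a, b⟩ hq
      dsimp only
      simp only [mem_filter, mem_product, mem_range] at hq ⊢
      obtain ⟨⟨ha, hb⟩, htb, hg⟩ := hq
      have := gS_le_of_subset hS b
      exact ⟨⟨ha, by omega⟩, by omega, (fcell_add a b).mpr hg⟩
    · rintro ⟨a, c⟩ hp
      simp only [mem_filter, mem_product, mem_range] at hp
      dsimp only
      simp only [Prod.mk.injEq]
      exact ⟨trivial, by omega⟩
    · rintro ⟨a, b⟩ _
      dsimp only
      simp only [Prod.mk.injEq]
      exact ⟨trivial, by omega⟩
  have step2 : ((range m ×ˢ range m).filter fun q => t ≤ q.2 ∧ q.1 < gS S q.2).card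
      = ∑ b ∈ range m, (if t ≤ b then gS S b else 0) := by
    rw [card_filter, sum_product_right]
    apply sum_congr rfl
    intro b _
    by_cases htb : t ≤ b
    · simp only [htb, true_and, if_true]
      have : (∑ a ∈ range m, if a < gS S b then 1 else 0)
          = ((range m).filter fun a => a < gS S b).card := (card_filter _ _).symm
      rw [this]
      have : ((range m).filter fun a => a < gS S b) = range (gS S b) := by
        ext a
        simp only [mem_filter, mem_range]
        have := gS_le_card S b
        omega
      rw [this, card_range]
    · simp [htb]
  have step3 : (∑ b ∈ range m, (if t ≤ b then gS S b else 0)) = ∑ s ∈ S, (s + 1 - t) := by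
    have expand : ∀ b, (if t ≤ b then gS S b else 0)
        = ∑ s ∈ S, (if t ≤ b ∧ b ≤ s then 1 else 0) := by
      intro b
      by_cases htb : t ≤ b
      · simp only [htb, if_true, true_and]
        unfold gS
        rw [card_filter]
      · simp [htb]
    rw [sum_congr rfl (fun b _ => expand b), sum_comm]
    apply sum_congr rfl
    intro s hs
    have hsm : s < m := by simpa using hS hs
    have : (∑ b ∈ range m, if t ≤ b ∧ b ≤ s then 1 else 0)
        = ((range m).filter fun b => t ≤ b ∧ b ≤ s).card := (card_filter _ _).symm
    rw [this]
    have : ((range m).filter fun b => t ≤ b ∧ b ≤ s) = Ico t (s + 1) := by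
      ext b
      simp only [mem_filter, mem_range, mem_Ico]
      omega
    rw [this, Nat.card_Ico]
  rw [step1, step2, step3]

lemma sum_mu {S : Finset ℕ} {m : ℕ} (hS : S ⊆ range m) :
    ∑ a ∈ range m, mu m S a = ∑ s ∈ S, (2 * s + 1) := by
  have eq1 : ∑ a ∈ range m, mu m S a
      = ((range m ×ˢ range m).filter fun p => fcell S p.1 p.2).card := by
    rw [card_filter, sum_product]
    apply sum_congr rfl
    intro a _
    unfold mu
    rw [card_filter]
  have split : ((range m ×ˢ range m).filter fun p => fcell S p.1 p.2).card
      = ((range m ×ˢ range m).filter fun p => p.1 + 0 ≤ p.2 ∧ fcell S p.1 p.2).card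
        + ((range m ×ˢ range m).filter fun p => p.2 + 1 ≤ p.1 ∧ fcell S p.1 p.2).card := by
    rw [← card_union_of_disjoint, ← filter_or]
    · apply congrArg
      apply filter_congr
      intro p _
      constructor
      · intro hf
        rcases le_or_gt p.1 p.2 with h | h
        · exact Or.inl ⟨by omega, hf⟩
        · exact Or.inr ⟨by omega, hf⟩
      · rintro (⟨_, hf⟩ | ⟨_, hf⟩) <;> exact hf
    · rw [disjoint_filter]
      rintro p _ ⟨h1, _⟩ ⟨h2, _⟩
      omega
  have swap : ((range m ×ˢ range m).filter fun p => p.2 + 1 ≤ p.1 ∧ fcell S p.1 p.2).card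
      = ((range m ×ˢ range m).filter fun p => p.1 + 1 ≤ p.2 ∧ fcell S p.1 p.2).card := by
    refine card_bij' (fun p _ => (p.2, p.1)) (fun p _ => (p.2, p.1)) ?_ ?_ ?_ ?_
    · rintro ⟨a, c⟩ hp
      dsimp only
      simp only [mem_filter, mem_product, mem_range] at hp ⊢
      exact ⟨⟨hp.1.2, hp.1.1⟩, hp.2.1, (fcell_comm S a c).mp hp.2.2⟩
    · rintro ⟨a, c⟩ hp
      dsimp only
      simp only [mem_filter, mem_product, mem_range] at hp ⊢
      exact ⟨⟨hp.1.2, hp.1.1⟩, hp.2.1, (fcell_comm S a c).mp hp.2.2⟩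
    · rintro ⟨a, c⟩ _; rfl
    · rintro ⟨a, c⟩ _; rfl
  rw [eq1, split, swap, sum_pairs hS 0, sum_pairs hS 1, ← sum_add_distrib]
  apply sum_congr rfl
  intro s _
  omega

/-! ### The partition attached to a finset of hook arm-lengths -/

def lamParts (k l : ℕ) (S : Finset ℕ) (i : ℕ) : ℕ :=
  if i < l then k else if i < k then l + mu (k - l) S (i - l) else 0

lemma lamParts_le {k l : ℕ} (hlk : l ≤ k) (S : Finset ℕ) (i : ℕ) :
    lamParts k l S i ≤ k := by
  unfold lamParts
  have := mu_le (k - l) S (i - l)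
  split_ifs <;> omega

lemma lamParts_eq_zero {k l : ℕ} (hlk : l ≤ k) (S : Finset ℕ) {i : ℕ} (h : k ≤ i) :
    lamParts k l S i = 0 := by
  unfold lamParts
  split_ifs <;> omega

lemma lamParts_anti {k l : ℕ} (hlk : l ≤ k) (S : Finset ℕ) {i j : ℕ} (h : i ≤ j) :
    lamParts k l S j ≤ lamParts k l S i := by
  unfold lamParts
  have hm1 := mu_le (k - l) S (j - l)
  have hm2 := mu_anti (k - l) S (show i - l ≤ j - l by omega)
  split_ifs <;> omega

noncomputable def Phi (k l : ℕ) (hlk : l ≤ k) (S : Finset ℕ) : FinsuppPartition where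
  parts := Finsupp.onFinset (range k) (lamParts k l S) (by
    intro i h
    rw [mem_range]
    by_contra hk
    exact h (lamParts_eq_zero hlk S (le_of_not_gt hk)))
  antitone := by
    intro i j hij
    simp only [Finsupp.onFinset_apply]
    exact lamParts_anti hlk S hij

lemma Phi_parts (k l : ℕ) (hlk : l ≤ k) (S : Finset ℕ) (i : ℕ) :
    (Phi k l hlk S).parts i = lamParts k l S i := rfl

lemma Phi_up (k l : ℕ) (hlk : l ≤ k) (S : Finset ℕ) (i : ℕ) :
    (Phi k l hlk S).parts i ≤ (if i < k then k else 0) := by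
  rw [Phi_parts]
  split_ifs with h
  · exact lamParts_le hlk S i
  · rw [lamParts_eq_zero hlk S (le_of_not_gt h)]

lemma Phi_low (k l : ℕ) (hlk : l ≤ k) (S : Finset ℕ) (i : ℕ) :
    (if i < l then k else if i < k then l else 0) ≤ (Phi k l hlk S).parts i := by
  rw [Phi_parts]
  unfold lamParts
  split_ifs <;> omega

lemma pconj_eq_range {k : ℕ} (lam : FinsuppPartition)
    (hup : ∀ i, lam.parts i ≤ (if i < k then k else 0)) (j : ℕ) :
    pconj lam j = ((range k).filter fun i => j < lam.parts i).card := by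
  unfold pconj
  congr 1
  ext i
  simp only [mem_filter, Finsupp.mem_support_iff, mem_range]
  constructor
  · rintro ⟨hne, hj⟩
    refine ⟨?_, hj⟩
    by_contra hik
    have := hup i
    rw [if_neg hik] at this
    omega
  · rintro ⟨hik, hj⟩
    exact ⟨by omega, hj⟩

lemma pconj_Phi {k l : ℕ} (hlk : l ≤ k) {S : Finset ℕ} (hS : S ⊆ range (k - l)) (j : ℕ) :
    pconj (Phi k l hlk S) j = (Phi k l hlk S).parts j := by
  rw [pconj_eq_range (Phi k l hlk S) (Phi_up k l hlk S) j, Phi_parts]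
  have hparts : ∀ i, (Phi k l hlk S).parts i = lamParts k l S i := Phi_parts k l hlk S
  by_cases hjl : j < l
  · rw [filter_true_of_mem, card_range]
    · unfold lamParts
      rw [if_pos hjl]
    · intro i hi
      rw [mem_range] at hi
      rw [hparts]
      unfold lamParts
      have := mu_le (k - l) S (i - l)
      split_ifs <;> omega
  · by_cases hjk : j < k
    · have hkey : (range k).filter (fun i => j < (Phi k l hlk S).parts i)
          = range l ∪ ((range (k - l)).filter fun a => fcell S a (j - l)).image (· + l) := by
        ext i
        simp only [mem_union, mem_filter, mem_range, mem_image, hparts]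
        constructor
        · rintro ⟨hik, hj⟩
          by_cases hil : i < l
          · exact Or.inl hil
          · right
            refine ⟨i - l, ⟨by omega, ?_⟩, by omega⟩
            unfold lamParts at hj
            rw [if_neg hil, if_pos hik] at hj
            exact (fcell_iff_lt_mu hS (i - l) (j - l)).mpr (by omega)
        · rintro (hil | ⟨a, ⟨ham, hfa⟩, rfl⟩)
          · refine ⟨by omega, ?_⟩
            unfold lamParts
            rw [if_pos hil]
            omega
          · have h1 : j - l < mu (k - l) S a := (fcell_iff_lt_mu hS a (j - l)).mp hfa
            refine ⟨by omega, ?_⟩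
            unfold lamParts
            rw [if_neg (by omega), if_pos (by omega)]
            have h2 : a + l - l = a := by omega
            rw [h2]
            omega
      rw [hkey, card_union_of_disjoint, card_range,
        card_image_of_injective _ (add_left_injective l)]
      · have h3 : ((range (k - l)).filter fun a => fcell S a (j - l)).card
            = mu (k - l) S (j - l) := by
          have : ((range (k - l)).filter fun a => fcell S a (j - l))
              = (range (k - l)).filter fun c => fcell S (j - l) c := by
            apply filter_congr
            intro a _
            rw [fcell_comm]
          rw [this]
          rfl
        rw [h3]
        unfold lamParts
        rw [if_neg hjl, if_pos hjk]
      · rw [disjoint_left]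
        rintro x hx1 hx2
        rw [mem_range] at hx1
        simp only [mem_image] at hx2
        obtain ⟨a, _, rfl⟩ := hx2
        omega
    · have hempty : (range k).filter (fun i => j < (Phi k l hlk S).parts i) = ∅ := by
        rw [filter_eq_empty_iff]
        intro i _
        rw [hparts]
        have := lamParts_le hlk S i
        omega
      rw [hempty, card_empty, lamParts_eq_zero hlk S (le_of_not_gt hjk)]

lemma psize_Phi {k l : ℕ} (hlk : l ≤ k) {S : Finset ℕ} (hS : S ⊆ range (k - l)) :
    psize (Phi k l hlk S) = (2 * k * l - l ^ 2) + ∑ s ∈ S, (2 * s + 1) := by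
  have h0 : psize (Phi k l hlk S)
      = ∑ i ∈ (Phi k l hlk S).parts.support, (Phi k l hlk S).parts i := rfl
  rw [h0]
  have hsum : ∑ i ∈ (Phi k l hlk S).parts.support, (Phi k l hlk S).parts i
      = ∑ i ∈ range k, (Phi k l hlk S).parts i := by
    apply sum_subset
    · intro i hi
      have hne := Finsupp.mem_support_iff.mp hi
      rw [Phi_parts] at hne
      rw [mem_range]
      by_contra h
      exact hne (lamParts_eq_zero hlk S (le_of_not_gt h))
    · intro i _ hni
      exact Finsupp.notMem_support_iff.mp hni
  rw [hsum]
  have hsplit : (∑ i ∈ Ico 0 l, (Phi k l hlk S).parts i)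
      + ∑ i ∈ Ico l k, (Phi k l hlk S).parts i
      = ∑ i ∈ Ico 0 k, (Phi k l hlk S).parts i :=
    sum_Ico_consecutive _ (Nat.zero_le l) hlk
  rw [range_eq_Ico, ← hsplit]
  have h1 : ∑ i ∈ Ico 0 l, (Phi k l hlk S).parts i = l * k := by
    rw [← range_eq_Ico]
    have hc : ∀ i ∈ range l, (Phi k l hlk S).parts i = k := by
      intro i hi
      rw [Phi_parts]
      unfold lamParts
      rw [if_pos (mem_range.mp hi)]
    rw [sum_congr rfl hc, sum_const, card_range, smul_eq_mul]
  have h2 : ∑ i ∈ Ico l k, (Phi k l hlk S).parts i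
      = (k - l) * l + ∑ s ∈ S, (2 * s + 1) := by
    rw [sum_Ico_eq_sum_range]
    have : ∀ j ∈ range (k - l), (Phi k l hlk S).parts (l + j) = l + mu (k - l) S j := by
      intro j hj
      rw [mem_range] at hj
      rw [Phi_parts]
      unfold lamParts
      rw [if_neg (by omega), if_pos (by omega)]
      have hj2 : l + j - l = j := by omega
      rw [hj2]
    rw [sum_congr rfl this, sum_add_distrib, sum_const, card_range, smul_eq_mul,
      sum_mu hS]
  rw [h1, h2]
  have e1 : l * k = k * l := mul_comm l k
  have e2 : (k - l) * l = k * l - l * l := Nat.sub_mul k l l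
  have e3 : l * l ≤ k * l := Nat.mul_le_mul_right l hlk
  have e4 : l ^ 2 = l * l := sq l
  have e5 : 2 * k * l = 2 * (k * l) := by ring
  omega

/-! ### Recovering the finset from a partition -/

def SofF (m : ℕ) (ν : ℕ → ℕ) : Finset ℕ :=
  ((range m).filter fun a => a < ν a).image fun a => ν a - a - 1

lemma SofF_subset {m : ℕ} {ν : ℕ → ℕ} (hle : ∀ a, ν a ≤ m) : SofF m ν ⊆ range m := by
  intro s hs
  simp only [SofF, mem_image, mem_filter, mem_range] at hs ⊢
  obtain ⟨a, ⟨ham, hav⟩, rfl⟩ := hs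
  have := hle a
  omega

lemma gS_SofF (m : ℕ) (ν : ℕ → ℕ) (hanti : ∀ {a b : ℕ}, a ≤ b → ν b ≤ ν a) (b : ℕ) :
    gS (SofF m ν) b = ((range m).filter fun j => j + b < ν j).card := by
  unfold gS
  have himg : (SofF m ν).filter (fun s => b ≤ s)
      = ((range m).filter fun j => j + b < ν j).image (fun j => ν j - j - 1) := by
    ext s
    simp only [SofF, mem_filter, mem_image, mem_range]
    constructor
    · rintro ⟨⟨a, ⟨ham, hav⟩, rfl⟩, hb⟩
      exact ⟨a, ⟨ham, by omega⟩, rfl⟩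
    · rintro ⟨a, ⟨ham, hav⟩, rfl⟩
      exact ⟨⟨a, ⟨ham, by omega⟩, rfl⟩, by omega⟩
  rw [himg, card_image_of_injOn]
  intro x hx y hy hxy
  simp only [coe_filter, Set.mem_setOf_eq, mem_range] at hx hy
  have hxy' : ν x - x - 1 = ν y - y - 1 := hxy
  rcases Nat.lt_trichotomy x y with h | h | h
  · have := hanti h.le
    omega
  · exact h
  · have := hanti h.le
    omega

lemma nu_card_mem (m : ℕ) (ν : ℕ → ℕ) (hanti : ∀ {a b : ℕ}, a ≤ b → ν b ≤ ν a)
    (b a : ℕ) (ham : a < m) :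
    a + b < ν a ↔ a < ((range m).filter fun j => j + b < ν j).card := by
  rw [← mem_iff_lt_card]
  · simp [mem_filter, mem_range, ham]
  · intro x hx y hy
    simp only [mem_filter, mem_range] at hx ⊢
    have := hanti hy
    omega

lemma partition_ext {p q : FinsuppPartition} (h : p.parts = q.parts) : p = q := by
  cases p; cases q
  cases h
  rfl

lemma Phi_Sof (k l : ℕ) (hlk : l ≤ k) (lam : FinsuppPartition)
    (hconj : ∀ j, pconj lam j = lam.parts j)
    (hlow : ∀ i, (if i < l then k else if i < k then l else 0) ≤ lam.parts i)
    (hup : ∀ i, lam.parts i ≤ (if i < k then k else 0)) :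
    Phi k l hlk (SofF (k - l) (fun a => lam.parts (l + a) - l)) = lam := by
  set m := k - l with hm
  set ν : ℕ → ℕ := fun a => lam.parts (l + a) - l with hν
  set S := SofF m ν with hSdef
  have hp_lt_l : ∀ i, i < l → lam.parts i = k := by
    intro i hi
    have h1 := hlow i
    have h2 := hup i
    rw [if_pos hi] at h1
    rw [if_pos (by omega : i < k)] at h2
    omega
  have hp_ge_k : ∀ i, k ≤ i → lam.parts i = 0 := by
    intro i hi
    have h2 := hup i
    rw [if_neg (by omega)] at h2
    omega
  have hp_mid : ∀ i, l ≤ i → i < k → l ≤ lam.parts i ∧ lam.parts i ≤ k := by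
    intro i h1 h2
    have h3 := hlow i
    have h4 := hup i
    rw [if_neg (by omega), if_pos h2] at h3
    rw [if_pos h2] at h4
    exact ⟨h3, h4⟩
  have hν_anti : ∀ {a b : ℕ}, a ≤ b → ν b ≤ ν a := by
    intro a b hab
    have := lam.antitone (show l + a ≤ l + b by omega)
    simp only [hν]
    omega
  have hν_le : ∀ a, ν a ≤ m := by
    intro a
    have h2 := hup (l + a)
    simp only [hν]
    split_ifs at h2 <;> omega
  have hν_zero : ∀ a, m ≤ a → ν a = 0 := by
    intro a ha
    have := hp_ge_k (l + a) (by omega)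
    simp only [hν]
    omega
  have hS_sub : S ⊆ range m := SofF_subset hν_le
  have hpconj : ∀ j, pconj lam j = ((range k).filter fun i => j < lam.parts i).card :=
    pconj_eq_range lam hup
  have conj_nu : ∀ c, c < m → ((range m).filter fun a => c < ν a).card = ν c := by
    intro c hc
    have h1 := hconj (l + c)
    rw [hpconj] at h1
    have hsplit : (range k).filter (fun i => l + c < lam.parts i)
        = range l ∪ ((range m).filter fun a => c < ν a).image (· + l) := by
      ext i
      simp only [mem_union, mem_filter, mem_range, mem_image]
      constructor
      · rintro ⟨hik, hj⟩
        by_cases hil : i < l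
        · exact Or.inl hil
        · right
          refine ⟨i - l, ⟨by omega, ?_⟩, by omega⟩
          have heq : l + (i - l) = i := by omega
          simp only [hν, heq]
          omega
      · rintro (hil | ⟨a, ⟨ham, hav⟩, rfl⟩)
        · rw [hp_lt_l i hil]
          omega
        · simp only [hν] at hav
          rw [Nat.add_comm a l]
          exact ⟨by omega, by omega⟩
    rw [hsplit, card_union_of_disjoint, card_range,
      card_image_of_injective _ (add_left_injective l)] at h1
    · have hb := hp_mid (l + c) (by omega) (by omega)
      have hνc : ν c = lam.parts (l + c) - l := rfl
      omega
    · rw [disjoint_left]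
      rintro x hx1 hx2
      rw [mem_range] at hx1
      simp only [mem_image] at hx2
      obtain ⟨a, _, rfl⟩ := hx2
      omega
  have nu_conj_iff : ∀ a c, a < m → c < m → (c < ν a ↔ a < ν c) := by
    intro a c ha hc
    rw [← conj_nu c hc, ← mem_iff_lt_card]
    · simp [mem_filter, mem_range, ha]
    · intro x hx y hy
      simp only [mem_filter, mem_range] at hx ⊢
      have := hν_anti hy
      omega
  have gS_S : ∀ b, gS S b = ((range m).filter fun j => j + b < ν j).card :=
    gS_SofF m ν hν_anti
  have fcell_aux : ∀ x, x < m → ∀ y, x ≤ y → (fcell S x y ↔ y < ν x) := by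
    intro x hx y hxy
    rw [fcell_le hxy, gS_S, ← nu_card_mem m ν hν_anti (y - x) x hx]
    omega
  have fcell_iff : ∀ a c, a < m → (fcell S a c ↔ c < ν a) := by
    intro a c ha
    by_cases hc : c < m
    · rcases le_or_gt a c with h | h
      · exact fcell_aux a ha c h
      · rw [fcell_comm, fcell_aux c hc a h.le]
        exact (nu_conj_iff a c ha hc).symm
    · constructor
      · intro hf
        exact absurd (fcell_lt hS_sub hf).2 hc
      · intro hf
        have := hν_le a
        omega
  have mu_eq : ∀ a, mu m S a = ν a := by
    intro a
    by_cases ha : a < m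
    · have h1 : (range m).filter (fun c => fcell S a c) = range (ν a) := by
        ext c
        simp only [mem_filter, mem_range]
        have := hν_le a
        rw [fcell_iff a c ha]
        omega
      unfold mu
      rw [h1, card_range]
    · rw [mu_eq_zero hS_sub (le_of_not_gt ha), hν_zero a (le_of_not_gt ha)]
  apply partition_ext
  ext i
  rw [Phi_parts]
  unfold lamParts
  rw [← hm]
  split_ifs with h1 h2
  · exact (hp_lt_l i h1).symm
  · rw [mu_eq (i - l)]
    have heq : l + (i - l) = i := by omega
    simp only [hν, heq]
    have := hp_mid i (by omega) h2
    omega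
  · exact (hp_ge_k i (by omega)).symm

lemma Sof_Phi (k l : ℕ) (hlk : l ≤ k) (S : Finset ℕ) (hS : S ⊆ range (k - l)) :
    SofF (k - l) (fun a => (Phi k l hlk S).parts (l + a) - l) = S := by
  set m := k - l with hm
  have hν : (fun a => (Phi k l hlk S).parts (l + a) - l) = mu m S := by
    funext a
    rw [Phi_parts]
    unfold lamParts
    rw [← hm]
    by_cases ham : a < m
    · rw [if_neg (by omega), if_pos (by omega)]
      have h : l + a - l = a := by omega
      rw [h]
      omega
    · rw [if_neg (by omega), if_neg (by omega)]
      rw [mu_eq_zero hS (le_of_not_gt ham)]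
      omega
  rw [hν]
  apply gS_injective
  intro b
  rw [gS_SofF m (mu m S) (fun {a b} h => mu_anti m S h) b]
  have h1 : ((range m).filter fun j => j + b < mu m S j)
      = (range m).filter fun j => j < gS S b := by
    apply filter_congr
    intro j hj
    rw [← fcell_iff_lt_mu hS j (j + b), fcell_add]
  rw [h1]
  have hle : gS S b ≤ m := le_trans (gS_le_card S b) (by simpa using card_le_card hS)
  have h2 : (range m).filter (fun j => j < gS S b) = range (gS S b) := by
    ext j
    simp only [mem_filter, mem_range]
    omega
  rw [h2, card_range]

end SCGF

open SCGF Finset in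
/-- For `k ≥ ℓ`, the generating function by size for self-conjugate partitions
containing `(k^ℓ, ℓ^{k-ℓ})` and contained in `(k^k)` is
`u^{2kℓ-ℓ²} ∏_{i=1}^{k-ℓ} (1 + u^{2i-1})`. -/
theorem selfconjugate_square_hook_gf (k l : ℕ) (hlk : l ≤ k) :
    (PowerSeries.mk fun n =>
        (Nat.card {lam : FinsuppPartition //
            psize lam = n ∧ (∀ j, pconj lam j = lam.parts j) ∧
            (∀ i, (if i < l then k else if i < k then l else 0) ≤ lam.parts i) ∧
            (∀ i, lam.parts i ≤ (if i < k then k else 0))} : ℚ)) =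
      (X : PowerSeries ℚ) ^ (2 * k * l - l ^ 2) *
        ∏ i ∈ Finset.range (k - l), (1 + (X : PowerSeries ℚ) ^ (2 * i + 1)) := by
  classical
  apply PowerSeries.ext
  intro n
  rw [PowerSeries.coeff_mk]
  have hprod : (∏ i ∈ Finset.range (k - l), (1 + (X : PowerSeries ℚ) ^ (2 * i + 1)))
      = ∑ t ∈ (Finset.range (k - l)).powerset,
          (X : PowerSeries ℚ) ^ (∑ i ∈ t, (2 * i + 1)) := by
    rw [Finset.prod_add]
    refine Finset.sum_bij' (fun t _ => Finset.range (k - l) \ t)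
      (fun t _ => Finset.range (k - l) \ t) ?_ ?_ ?_ ?_ ?_
    · intro t _
      exact Finset.mem_powerset.mpr (Finset.sdiff_subset)
    · intro t _
      exact Finset.mem_powerset.mpr (Finset.sdiff_subset)
    · intro t ht
      exact Finset.sdiff_sdiff_eq_self (Finset.mem_powerset.mp ht)
    · intro t ht
      exact Finset.sdiff_sdiff_eq_self (Finset.mem_powerset.mp ht)
    · intro t _
      rw [Finset.prod_const_one, one_mul, Finset.prod_pow_eq_pow_sum]
  rw [hprod, Finset.mul_sum]
  have hXpow : ∀ t : Finset ℕ,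
      (X : PowerSeries ℚ) ^ (2 * k * l - l ^ 2) * (X : PowerSeries ℚ) ^ (∑ i ∈ t, (2 * i + 1))
        = (X : PowerSeries ℚ) ^ ((2 * k * l - l ^ 2) + ∑ i ∈ t, (2 * i + 1)) :=
    fun t => (pow_add _ _ _).symm
  rw [Finset.sum_congr rfl (fun t _ => hXpow t), map_sum]
  have hco : ∀ t : Finset ℕ,
      (PowerSeries.coeff (R := ℚ) n) ((X : PowerSeries ℚ) ^ ((2 * k * l - l ^ 2) + ∑ i ∈ t, (2 * i + 1)))
        = if n = (2 * k * l - l ^ 2) + ∑ i ∈ t, (2 * i + 1) then 1 else 0 :=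
    fun t => PowerSeries.coeff_X_pow n _
  rw [Finset.sum_congr rfl (fun t _ => hco t), Finset.sum_boole]
  have hmemS : ∀ (lam : FinsuppPartition), psize lam = n → (∀ j, pconj lam j = lam.parts j) →
      (∀ i, (if i < l then k else if i < k then l else 0) ≤ lam.parts i) →
      (∀ i, lam.parts i ≤ (if i < k then k else 0)) →
      SofF (k - l) (fun a => lam.parts (l + a) - l)
        ∈ (Finset.range (k - l)).powerset.filter
            (fun t => n = (2 * k * l - l ^ 2) + ∑ i ∈ t, (2 * i + 1)) := by
    intro lam h1 h2 h3 h4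
    have hν_le : ∀ a, lam.parts (l + a) - l ≤ k - l := by
      intro a
      have := h4 (l + a)
      split_ifs at this <;> omega
    have hsub : SofF (k - l) (fun a => lam.parts (l + a) - l) ⊆ Finset.range (k - l) :=
      SofF_subset hν_le
    rw [Finset.mem_filter, Finset.mem_powerset]
    refine ⟨hsub, ?_⟩
    have hps := psize_Phi hlk hsub
    rw [Phi_Sof k l hlk lam h2 h3 h4] at hps
    rw [← h1]
    exact hps
  have hcount : Nat.card {lam : FinsuppPartition //
      psize lam = n ∧ (∀ j, pconj lam j = lam.parts j) ∧
      (∀ i, (if i < l then k else if i < k then l else 0) ≤ lam.parts i) ∧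
      (∀ i, lam.parts i ≤ (if i < k then k else 0))}
      = ((Finset.range (k - l)).powerset.filter
          (fun t => n = (2 * k * l - l ^ 2) + ∑ i ∈ t, (2 * i + 1))).card := by
    rw [← Nat.card_eq_finsetCard]
    apply Nat.card_congr
    exact {
      toFun := fun x => ⟨SofF (k - l) (fun a => x.1.parts (l + a) - l),
        hmemS x.1 x.2.1 x.2.2.1 x.2.2.2.1 x.2.2.2.2⟩
      invFun := fun t => ⟨Phi k l hlk t.1, by
        have ht := t.2
        rw [Finset.mem_filter, Finset.mem_powerset] at ht
        refine ⟨?_, pconj_Phi hlk ht.1, Phi_low k l hlk t.1, Phi_up k l hlk t.1⟩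
        rw [psize_Phi hlk ht.1]
        exact ht.2.symm⟩
      left_inv := fun x => Subtype.ext (Phi_Sof k l hlk x.1 x.2.2.1 x.2.2.2.1 x.2.2.2.2)
      right_inv := fun t => Subtype.ext (by
        have ht := t.2
        rw [Finset.mem_filter, Finset.mem_powerset] at ht
        exact Sof_Phi k l hlk t.1 ht.1) }
  rw [hcount]
end
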